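/- Let m be an even positive integer and let f be a cyclic bent function on F_{2^{m−1}} × F_2 with f(0,0) = f(0,1) = 0. Define the binary code C(f) = { c_{(a,λ,u,v)} : a, λ ∈ F_{2^{m−1}}, u, v ∈ F_2 }, where c_{(a,λ,u,v)} is the vector ( f(a x₁, x₂) + Tr^{m−1}_1(λ x₁) + u x₂ + v )_{(x₁,x₂) ∈ F_{2^{m−1}} × F_2} ∈ F_2^{2^m}. Then the 2^{2m} codewords c_{(a,λ,u,v)} are pairwise distinct, the minimum Hamming distance of C(f) is 2^{m−1} − 2^{(m−2)/2}, every codeword has Hamming weight in {0, 2^m, 2^{m−1}, 2^{m−1} + 2^{(m−2)/2}, 2^{m−1} − 2^{(m−2)/2}}, and the number of codewords of weight 0, 2^m, 2^{m−1}, 2^{m−1}+2^{(m−2)/2}, 2^{m−1}−2^{(m−2)/2} is 1, 1, 2^{m+1}−2, 2^m(2^{m−1}−1), 2^m(2^{m−1}−1) respectively. -/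

import Mathlib

/-!
For `g : F_{2^{m-1}} × F_2 → F_2` we have `∑ (-1)^g = 2^m - 2 wt(g)`, so the codeword
`g + Tr(λ x₁) + u x₂ + v` has weight `(2^m - (-1)^v W_g(λ, u)) / 2`. The sum of the codewords of
`(a, λ, u, v)` and `(a', λ', u', v')` is again of this shape, with `g = f(a x₁, x₂) + f(a' x₁, x₂)`.
If `a ≠ a'`, cyclicity makes `g` bent and the weight is `2^{m-1} ± 2^{(m-2)/2}`; if `a = a'`, then
`g = 0`, whose Walsh transform vanishes off `(0, 0)`, and the weight is `0`, `2^m` or `2^{m-1}`.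
Since `f(0, ·) = 0`, weights are distances to the zero codeword, and flipping `v` complements a
codeword, which pairs the two weights `2^{m-1} ± 2^{(m-2)/2}` in the count.
-/

open Finset

noncomputable section

abbrev Fq (n : ℕ) := GaloisField 2 n

noncomputable instance (n : ℕ) : Fintype (Fq n) := Fintype.ofFinite _

/-- Absolute trace from `F_{2^n}` to `F_2`. -/
noncomputable def tr1 (n : ℕ) (x : Fq n) : ZMod 2 :=
  Algebra.trace (ZMod 2) (Fq n) x

/-- `(-1)^x` for `x : F_2`, as an integer. -/
def chi (x : ZMod 2) : ℤ := (-1 : ℤ) ^ x.val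

/-- Walsh transform of a Boolean function on `F_{2^n} × F_2`. -/
noncomputable def walsh (n : ℕ) (f : Fq n × ZMod 2 → ZMod 2)
    (lam : Fq n) (nu : ZMod 2) : ℤ :=
  ∑ x : Fq n × ZMod 2, chi (f x + tr1 n (lam * x.1) + nu * x.2)

/-- A Boolean function on `F_{2^{m-1}} × F_2` is bent if all its Walsh coefficients
are `± 2^(m/2)`. -/
def IsBent (m : ℕ) (f : Fq (m - 1) × ZMod 2 → ZMod 2) : Prop :=
  ∀ lam nu, walsh (m - 1) f lam nu = 2 ^ (m / 2) ∨ walsh (m - 1) f lam nu = -(2 ^ (m / 2))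

/-- Cyclic bent function on `F_{2^{m-1}} × F_2`. -/
def IsCyclicBent (m : ℕ) (f : Fq (m - 1) × ZMod 2 → ZMod 2) : Prop :=
  ∀ a b : Fq (m - 1), a ≠ b → ∀ ε : ZMod 2,
    IsBent m fun x => f (a * x.1, x.2) + f (b * x.1, x.2 + ε)

noncomputable instance (n : ℕ) : DecidableEq (Fq n) := Classical.decEq _

/-- The codeword `c_{(a,λ,u,v)} = (f(a x₁, x₂) + Tr(λ x₁) + u x₂ + v)_{(x₁,x₂)}`,
viewed as a vector in `F_2^{2^m}` indexed by `F_{2^{m-1}} × F_2`. -/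
noncomputable def cword (m : ℕ) (f : Fq (m - 1) × ZMod 2 → ZMod 2)
    (q : Fq (m - 1) × Fq (m - 1) × ZMod 2 × ZMod 2)
    (x : Fq (m - 1) × ZMod 2) : ZMod 2 :=
  f (q.1 * x.1, x.2) + tr1 (m - 1) (q.2.1 * x.1) + q.2.2.1 * x.2 + q.2.2.2

/-- Hamming weight of a vector indexed by `F_{2^{m-1}} × F_2`. -/
noncomputable def hwt (m : ℕ) (c : Fq (m - 1) × ZMod 2 → ZMod 2) : ℕ :=
  (Finset.univ.filter fun x : Fq (m - 1) × ZMod 2 => c x ≠ 0).card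

/-- Hamming distance. -/
noncomputable def hdist (m : ℕ) (c c' : Fq (m - 1) × ZMod 2 → ZMod 2) : ℕ :=
  (Finset.univ.filter fun x : Fq (m - 1) × ZMod 2 => c x ≠ c' x).card

@[simp] lemma chi_zero : chi 0 = 1 := rfl

@[simp] lemma chi_one : chi 1 = -1 := rfl

lemma chi_of_ne_zero {a : ZMod 2} (ha : a ≠ 0) : chi a = -1 := by
  decide +revert

lemma chi_add (a b : ZMod 2) : chi (a + b) = chi a * chi b := by
  decide +revert

lemma chi_eq_one_sub (a : ZMod 2) : chi a = 1 - 2 * if a ≠ 0 then 1 else 0 := by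
  decide +revert

lemma sum_chi_eq_card_sub {ι : Type*} [Fintype ι] (g : ι → ZMod 2) :
    ∑ x, chi (g x) = Fintype.card ι - 2 * #{x | g x ≠ 0} := by
  simp only [chi_eq_one_sub, sum_sub_distrib, ← mul_sum, sum_boole, sum_const, card_univ,
    nsmul_eq_mul, mul_one]

lemma sum_chi_mul_zmod2 (u : ZMod 2) : ∑ x : ZMod 2, chi (u * x) = if u = 0 then 2 else 0 := by
  decide +revert

lemma card_Fq {n : ℕ} (hn : n ≠ 0) : Fintype.card (Fq n) = 2 ^ n := by
  rw [← Nat.card_eq_fintype_card, GaloisField.card 2 n hn]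

lemma card_Fq_prod_zmod2 {m : ℕ} (hm : 2 ≤ m) : Fintype.card (Fq (m - 1) × ZMod 2) = 2 ^ m := by
  rw [Fintype.card_prod, card_Fq (by omega), ZMod.card, ← pow_succ]
  congr 1
  omega

lemma tr1_add (n : ℕ) (a b : Fq n) : tr1 n (a + b) = tr1 n a + tr1 n b :=
  map_add _ a b

lemma sum_chi_tr1 (n : ℕ) : ∑ y : Fq n, chi (tr1 n y) = 0 := by
  obtain ⟨z, hz⟩ : ∃ z, tr1 n z = 1 := Algebra.trace_surjective (ZMod 2) (Fq n) 1
  -- translating by an element of trace one flips the sign of every term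
  have hshift : ∑ y : Fq n, chi (tr1 n (y + z)) = ∑ y : Fq n, chi (tr1 n y) :=
    Fintype.sum_equiv (Equiv.addRight z) _ _ fun _ => rfl
  have hneg : ∀ y, chi (tr1 n (y + z)) = -chi (tr1 n y) := fun y => by
    rw [tr1_add, chi_add, hz, chi_one, mul_neg_one]
  simp only [hneg, sum_neg_distrib] at hshift
  linarith

lemma sum_chi_tr1_mul {n : ℕ} (hn : n ≠ 0) (lam : Fq n) :
    ∑ x : Fq n, chi (tr1 n (lam * x)) = if lam = 0 then 2 ^ n else 0 := by
  split_ifs with h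
  · simp [h, tr1, chi, card_Fq hn]
  · rw [← sum_chi_tr1 n]
    exact Fintype.sum_equiv (Equiv.mulLeft₀ lam h) _ _ fun _ => rfl

def addAffine (n : ℕ) (g : Fq n × ZMod 2 → ZMod 2) (lam : Fq n) (u v : ZMod 2)
    (x : Fq n × ZMod 2) : ZMod 2 :=
  g x + tr1 n (lam * x.1) + u * x.2 + v

lemma sum_chi_addAffine (n : ℕ) (g : Fq n × ZMod 2 → ZMod 2) (lam : Fq n) (u v : ZMod 2) :
    ∑ x, chi (addAffine n g lam u v x) = chi v * walsh n g lam u := by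
  rw [walsh, mul_sum]
  exact sum_congr rfl fun x _ => by rw [addAffine, chi_add]; ring

lemma walsh_zero {n : ℕ} (hn : n ≠ 0) (lam : Fq n) (u : ZMod 2) :
    walsh n 0 lam u = if lam = 0 ∧ u = 0 then 2 ^ (n + 1) else 0 := by
  simp only [walsh, Fintype.sum_prod_type, Pi.zero_apply, zero_add, chi_add, ← sum_mul_sum,
    sum_chi_tr1_mul hn, sum_chi_mul_zmod2]
  split_ifs <;> simp_all [pow_succ]

lemma two_pow_sub_one_mul_two {m : ℕ} (hm : 1 ≤ m) : 2 ^ m = 2 * 2 ^ (m - 1) := by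
  rw [← pow_succ']
  congr 1
  omega

lemma two_pow_half_bounds {m : ℕ} (hm : 2 ≤ m) :
    0 < 2 ^ ((m - 2) / 2) ∧ 2 ^ ((m - 2) / 2) < 2 ^ (m - 1) ∧ 2 ^ m = 2 * 2 ^ (m - 1) :=
  ⟨by positivity, Nat.pow_lt_pow_right one_lt_two (by omega), two_pow_sub_one_mul_two (by omega)⟩

section Weight

variable {m : ℕ}

lemma hwt_eq_zero_iff {c : Fq (m - 1) × ZMod 2 → ZMod 2} : hwt m c = 0 ↔ c = 0 := by
  simp [hwt, funext_iff]

lemma hdist_eq_hwt_add (c c' : Fq (m - 1) × ZMod 2 → ZMod 2) :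
    hdist m c c' = hwt m fun x => c x + c' x := by
  have h : ∀ a b : ZMod 2, a ≠ b ↔ a + b ≠ 0 := by decide
  exact congrArg card (filter_congr fun x _ => h (c x) (c' x))

lemma two_mul_hwt (hm : 2 ≤ m) (c : Fq (m - 1) × ZMod 2 → ZMod 2) :
    (2 * hwt m c : ℤ) = 2 ^ m - ∑ x, chi (c x) := by
  rw [sum_chi_eq_card_sub, card_Fq_prod_zmod2 hm, hwt]
  push_cast
  ring

lemma hwt_le (hm : 2 ≤ m) (c : Fq (m - 1) × ZMod 2 → ZMod 2) : hwt m c ≤ 2 ^ m :=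
  (card_filter_le _ _).trans_eq (by rw [card_univ, card_Fq_prod_zmod2 hm])

lemma hwt_add_one (hm : 2 ≤ m) (c : Fq (m - 1) × ZMod 2 → ZMod 2) :
    hwt m (fun x => c x + 1) = 2 ^ m - hwt m c := by
  have hflip : ∑ x, chi (c x + 1) = -∑ x, chi (c x) := by
    simp [chi_add]
  have h := two_mul_hwt hm c
  have h' := two_mul_hwt hm fun x => c x + 1
  zify [hwt_le hm c]
  linarith

lemma two_mul_hwt_addAffine (hm : 2 ≤ m) (g : Fq (m - 1) × ZMod 2 → ZMod 2) (lam : Fq (m - 1))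
    (u v : ZMod 2) :
    (2 * hwt m (addAffine (m - 1) g lam u v) : ℤ) = 2 ^ m - chi v * walsh (m - 1) g lam u := by
  rw [two_mul_hwt hm, sum_chi_addAffine]

lemma hwt_addAffine_zero (hm : 2 ≤ m) (lam : Fq (m - 1)) (u v : ZMod 2) :
    hwt m (addAffine (m - 1) 0 lam u v)
      = if lam = 0 ∧ u = 0 then (if v = 0 then 0 else 2 ^ m) else 2 ^ (m - 1) := by
  have h := two_mul_hwt_addAffine hm 0 lam u v
  rw [walsh_zero (by omega), Nat.sub_add_cancel (by omega : 1 ≤ m)] at h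
  have hP : (2 : ℤ) ^ m = 2 * 2 ^ (m - 1) := by exact_mod_cast two_pow_sub_one_mul_two (by omega)
  zify
  split_ifs at h ⊢ with hlu hv
  · subst hv
    rw [chi_zero] at h
    linarith
  · rw [chi_of_ne_zero hv] at h
    linarith
  · rw [mul_zero] at h
    linarith

lemma hwt_addAffine_of_isBent (hm : 2 ≤ m) {g : Fq (m - 1) × ZMod 2 → ZMod 2} (hg : IsBent m g)
    (lam : Fq (m - 1)) (u v : ZMod 2) :
    hwt m (addAffine (m - 1) g lam u v) = 2 ^ (m - 1) + 2 ^ ((m - 2) / 2) ∨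
      hwt m (addAffine (m - 1) g lam u v) = 2 ^ (m - 1) - 2 ^ ((m - 2) / 2) := by
  have h := two_mul_hwt_addAffine hm g lam u v
  have hP : (2 : ℤ) ^ m = 2 * 2 ^ (m - 1) := by exact_mod_cast two_pow_sub_one_mul_two (by omega)
  have hE : (2 : ℤ) ^ (m / 2) = 2 * 2 ^ ((m - 2) / 2) := by
    rw [← pow_succ']
    congr 1
    omega
  have hsign : chi v * walsh (m - 1) g lam u = 2 ^ (m / 2) ∨
      chi v * walsh (m - 1) g lam u = -2 ^ (m / 2) := by
    rcases hg lam u with hw | hw <;> rcases eq_or_ne v 0 with hv | hv <;>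
      simp [hw, hv, chi_of_ne_zero]
  rcases hsign with hs | hs
  · right
    zify [(two_pow_half_bounds hm).2.1.le]
    linarith
  · left
    zify
    linarith

end Weight

section Code

variable {m : ℕ} {f : Fq (m - 1) × ZMod 2 → ZMod 2}

lemma IsCyclicBent.isBent_add (hf : IsCyclicBent m f) {a b : Fq (m - 1)} (hab : a ≠ b) :
    IsBent m fun x => f (a * x.1, x.2) + f (b * x.1, x.2) := by
  simpa only [add_zero] using hf a b hab 0

lemma IsCyclicBent.isBent (hf : IsCyclicBent m f) (h0 : ∀ x₂, f (0, x₂) = 0) {a : Fq (m - 1)}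
    (ha : a ≠ 0) : IsBent m fun x => f (a * x.1, x.2) := by
  simpa only [zero_mul, h0, add_zero] using hf.isBent_add ha

lemma cword_add_cword (q q' : Fq (m - 1) × Fq (m - 1) × ZMod 2 × ZMod 2) :
    (fun x => cword m f q x + cword m f q' x) =
      addAffine (m - 1) (fun x => f (q.1 * x.1, x.2) + f (q'.1 * x.1, x.2))
        (q.2.1 + q'.2.1) (q.2.2.1 + q'.2.2.1) (q.2.2.2 + q'.2.2.2) := by
  funext x
  simp only [cword, addAffine, add_mul, tr1_add]
  ring

lemma cword_add_single (q : Fq (m - 1) × Fq (m - 1) × ZMod 2 × ZMod 2) :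
    cword m f (q + (0, 0, 0, 1)) = fun x => cword m f q x + 1 := by
  funext x
  simp only [cword, Prod.fst_add, Prod.snd_add, add_zero]
  ring

lemma cword_zero_fst (h0 : ∀ x₂, f (0, x₂) = 0) (lam : Fq (m - 1)) (u v : ZMod 2) :
    cword m f (0, lam, u, v) = addAffine (m - 1) 0 lam u v := by
  funext x
  simp [cword, addAffine, h0]

lemma cword_zero (h0 : ∀ x₂, f (0, x₂) = 0) : cword m f 0 = 0 := by
  funext x
  simp [cword, tr1, h0]

lemma hwt_cword_zero_fst (hm : 2 ≤ m) (h0 : ∀ x₂, f (0, x₂) = 0) (lam : Fq (m - 1))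
    (u v : ZMod 2) :
    hwt m (cword m f (0, lam, u, v))
      = if lam = 0 ∧ u = 0 then (if v = 0 then 0 else 2 ^ m) else 2 ^ (m - 1) := by
  rw [cword_zero_fst h0]
  exact hwt_addAffine_zero hm lam u v

lemma hwt_cword_of_fst_ne_zero (hm : 2 ≤ m) (hf : IsCyclicBent m f) (h0 : ∀ x₂, f (0, x₂) = 0)
    (q : Fq (m - 1) × Fq (m - 1) × ZMod 2 × ZMod 2) (hq : q.1 ≠ 0) :
    hwt m (cword m f q) = 2 ^ (m - 1) + 2 ^ ((m - 2) / 2) ∨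
      hwt m (cword m f q) = 2 ^ (m - 1) - 2 ^ ((m - 2) / 2) :=
  hwt_addAffine_of_isBent hm (hf.isBent h0 hq) _ _ _

lemma hwt_cword_add_single (hm : 2 ≤ m) (q : Fq (m - 1) × Fq (m - 1) × ZMod 2 × ZMod 2) :
    hwt m (cword m f (q + (0, 0, 0, 1))) = 2 ^ m - hwt m (cword m f q) := by
  rw [cword_add_single]
  exact hwt_add_one hm _

lemma le_hdist_cword (hm : 2 ≤ m) (hf : IsCyclicBent m f)
    {q q' : Fq (m - 1) × Fq (m - 1) × ZMod 2 × ZMod 2} (hne : q ≠ q') :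
    2 ^ (m - 1) - 2 ^ ((m - 2) / 2) ≤ hdist m (cword m f q) (cword m f q') := by
  obtain ⟨hE0, hE, hP⟩ := two_pow_half_bounds hm
  rw [hdist_eq_hwt_add, cword_add_cword]
  by_cases ha : q.1 = q'.1
  · have hg : (fun x : Fq (m - 1) × ZMod 2 => f (q.1 * x.1, x.2) + f (q'.1 * x.1, x.2)) = 0 := by
      funext x
      rw [ha]
      exact CharTwo.add_self_eq_zero _
    have hrest : ¬(q.2.1 + q'.2.1 = 0 ∧ q.2.2.1 + q'.2.2.1 = 0 ∧ q.2.2.2 + q'.2.2.2 = 0) := by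
      simp only [CharTwo.add_eq_zero]
      exact fun h => hne (Prod.ext ha (Prod.ext h.1 (Prod.ext h.2.1 h.2.2)))
    rw [hg, hwt_addAffine_zero hm]
    split_ifs with h h'
    · exact absurd ⟨h.1, h.2, h'⟩ hrest
    all_goals omega
  · rcases hwt_addAffine_of_isBent hm (hf.isBent_add ha) (q.2.1 + q'.2.1) (q.2.2.1 + q'.2.2.1)
      (q.2.2.2 + q'.2.2.2) with h | h <;> omega

lemma cword_injective (hm : 2 ≤ m) (hf : IsCyclicBent m f) : Function.Injective (cword m f) := by
  intro q q' h
  by_contra hne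
  have hd := le_hdist_cword hm hf hne
  obtain ⟨-, hE, -⟩ := two_pow_half_bounds hm
  rw [h, show hdist m (cword m f q') (cword m f q') = 0 by simp [hdist]] at hd
  omega

lemma hwt_cword_mem (hm : 2 ≤ m) (hf : IsCyclicBent m f) (h0 : ∀ x₂, f (0, x₂) = 0)
    (q : Fq (m - 1) × Fq (m - 1) × ZMod 2 × ZMod 2) :
    hwt m (cword m f q) ∈ ({0, 2 ^ m, 2 ^ (m - 1), 2 ^ (m - 1) + 2 ^ ((m - 2) / 2),
      2 ^ (m - 1) - 2 ^ ((m - 2) / 2)} : Set ℕ) := by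
  obtain ⟨a, lam, u, v⟩ := q
  by_cases ha : a = 0
  · subst ha
    rw [hwt_cword_zero_fst hm h0]
    split_ifs <;> simp
  · rcases hwt_cword_of_fst_ne_zero hm hf h0 (a, lam, u, v) ha with h | h <;> simp [h]

lemma filter_hwt_cword_eq_zero (hm : 2 ≤ m) (hf : IsCyclicBent m f) (h0 : ∀ x₂, f (0, x₂) = 0) :
    univ.filter (fun q => hwt m (cword m f q) = 0) = {0} := by
  ext q
  simp only [mem_filter, mem_univ, true_and, mem_singleton, hwt_eq_zero_iff, ← cword_zero h0]
  exact (cword_injective hm hf).eq_iff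

lemma card_filter_hwt_cword_eq_two_pow_sub (hm : 2 ≤ m) {w : ℕ} (hw : w ≤ 2 ^ m) :
    #{q | hwt m (cword m f q) = 2 ^ m - w} = #{q | hwt m (cword m f q) = w} := by
  refine card_equiv (Equiv.addRight (0, 0, 0, 1)) fun q => ?_
  have hle := hwt_le hm (cword m f q)
  simp only [mem_filter, mem_univ, true_and, Equiv.coe_addRight, hwt_cword_add_single hm]
  omega

lemma filter_hwt_cword_eq_two_pow_pred (hm : 2 ≤ m) (hf : IsCyclicBent m f)
    (h0 : ∀ x₂, f (0, x₂) = 0) :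
    univ.filter (fun q => hwt m (cword m f q) = 2 ^ (m - 1)) =
      ({0} ×ˢ univ) \ {0, (0, 0, 0, 1)} := by
  obtain ⟨hE0, hE, hP⟩ := two_pow_half_bounds hm
  ext ⟨a, lam, u, v⟩
  by_cases ha : a = 0
  · subst ha
    rw [mem_filter, hwt_cword_zero_fst hm h0]
    split_ifs with hlu hv
    · simp [hlu, hv]
      omega
    · have hv1 : v = 1 := by revert v; decide
      simp [hlu, hv1]
      omega
    · simp only [mem_univ, mem_sdiff, mem_product, mem_insert, mem_singleton, Prod.ext_iff,
        Prod.fst_zero, Prod.snd_zero]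
      tauto
  · rcases hwt_cword_of_fst_ne_zero hm hf h0 (a, lam, u, v) ha with h | h <;>
      simp [h, Ne.symm ha]
    omega

lemma filter_hwt_cword_eq_add_or_sub (hm : 2 ≤ m) (hf : IsCyclicBent m f)
    (h0 : ∀ x₂, f (0, x₂) = 0) :
    univ.filter (fun q => hwt m (cword m f q) = 2 ^ (m - 1) + 2 ^ ((m - 2) / 2) ∨
        hwt m (cword m f q) = 2 ^ (m - 1) - 2 ^ ((m - 2) / 2)) = {0}ᶜ ×ˢ univ := by
  obtain ⟨hE0, hE, hP⟩ := two_pow_half_bounds hm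
  ext ⟨a, lam, u, v⟩
  by_cases ha : a = 0
  · subst ha
    rw [mem_filter, hwt_cword_zero_fst hm h0]
    split_ifs <;> simp <;> omega
  · simpa [ha] using hwt_cword_of_fst_ne_zero hm hf h0 (a, lam, u, v) ha

lemma exists_ne_hdist_cword_eq (hm : 2 ≤ m) (hf : IsCyclicBent m f) (h0 : ∀ x₂, f (0, x₂) = 0) :
    ∃ q q' : Fq (m - 1) × Fq (m - 1) × ZMod 2 × ZMod 2, q ≠ q' ∧
      hdist m (cword m f q) (cword m f q') = 2 ^ (m - 1) - 2 ^ ((m - 2) / 2) := by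
  obtain ⟨hE0, hE, hP⟩ := two_pow_half_bounds hm
  obtain ⟨q, hq⟩ : ∃ q, hwt m (cword m f q) = 2 ^ (m - 1) - 2 ^ ((m - 2) / 2) := by
    rcases hwt_cword_of_fst_ne_zero hm hf h0 (1, 0, 0, 0) one_ne_zero with h | h
    · exact ⟨(1, 0, 0, 0) + (0, 0, 0, 1), by rw [hwt_cword_add_single hm, h]; omega⟩
    · exact ⟨_, h⟩
  refine ⟨q, 0, fun h => ?_, ?_⟩
  · rw [h, cword_zero h0, hwt_eq_zero_iff.2 rfl] at hq
    omega
  · rw [cword_zero h0, hdist_eq_hwt_add]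
    simpa using hq

lemma card_filter_hwt_cword_eq_two_pow_pred (hm : 2 ≤ m) (hf : IsCyclicBent m f)
    (h0 : ∀ x₂, f (0, x₂) = 0) :
    #{q | hwt m (cword m f q) = 2 ^ (m - 1)} = 2 ^ (m + 1) - 2 := by
  obtain ⟨-, -, hP⟩ := two_pow_half_bounds hm
  have hsub : ({0, (0, 0, 0, 1)} : Finset (Fq (m - 1) × Fq (m - 1) × ZMod 2 × ZMod 2)) ⊆
      {0} ×ˢ univ := by
    simp [insert_subset_iff]
  rw [filter_hwt_cword_eq_two_pow_pred hm hf h0, card_sdiff_of_subset hsub,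
    card_pair (by simp [Prod.ext_iff]), card_product, card_singleton, card_univ]
  simp only [Fintype.card_prod, card_Fq (show m - 1 ≠ 0 by omega), ZMod.card]
  rw [pow_succ]
  omega

lemma card_filter_hwt_cword_eq_sub (hm : 2 ≤ m) (hf : IsCyclicBent m f)
    (h0 : ∀ x₂, f (0, x₂) = 0) :
    #{q | hwt m (cword m f q) = 2 ^ (m - 1) - 2 ^ ((m - 2) / 2)} = 2 ^ m * (2 ^ (m - 1) - 1) := by
  obtain ⟨hE0, hE, hP⟩ := two_pow_half_bounds hm
  have hflip := card_filter_hwt_cword_eq_two_pow_sub (f := f) hm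
    (w := 2 ^ (m - 1) + 2 ^ ((m - 2) / 2)) (by omega)
  rw [show 2 ^ m - (2 ^ (m - 1) + 2 ^ ((m - 2) / 2)) = 2 ^ (m - 1) - 2 ^ ((m - 2) / 2) by omega]
    at hflip
  have hunion := congrArg card (filter_hwt_cword_eq_add_or_sub hm hf h0)
  rw [filter_or, card_union_of_disjoint (disjoint_filter.2 fun _ _ h h' => by omega), card_product,
    card_compl, card_singleton, card_univ] at hunion
  simp only [Fintype.card_prod, card_Fq (show m - 1 ≠ 0 by omega), ZMod.card] at hunion
  have hcount : (2 ^ (m - 1) - 1) * (2 ^ (m - 1) * (2 * 2)) = 2 * (2 ^ m * (2 ^ (m - 1) - 1)) := by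
    rw [hP]
    ring
  omega

lemma card_filter_hwt_cword_eq_add (hm : 2 ≤ m) (hf : IsCyclicBent m f)
    (h0 : ∀ x₂, f (0, x₂) = 0) :
    #{q | hwt m (cword m f q) = 2 ^ (m - 1) + 2 ^ ((m - 2) / 2)} = 2 ^ m * (2 ^ (m - 1) - 1) := by
  obtain ⟨hE0, hE, hP⟩ := two_pow_half_bounds hm
  rw [← card_filter_hwt_cword_eq_two_pow_sub hm (by omega),
    show 2 ^ m - (2 ^ (m - 1) + 2 ^ ((m - 2) / 2)) = 2 ^ (m - 1) - 2 ^ ((m - 2) / 2) by omega,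
    card_filter_hwt_cword_eq_sub hm hf h0]

end Code

/-- the generalized Kerdock code `C(f)` obtained from a cyclic bent
function: `2^{2m}` pairwise distinct codewords, the indicated weight distribution, and
minimum distance `2^{m-1} - 2^{(m-2)/2}`. -/
theorem stmt16 (m : ℕ) (hm : Even m) (hm0 : 0 < m)
    (f : Fq (m - 1) × ZMod 2 → ZMod 2) (hf : IsCyclicBent m f)
    (hf00 : f (0, 0) = 0) (hf01 : f (0, 1) = 0) :
    Function.Injective (cword m f) ∧
    (∀ q : Fq (m - 1) × Fq (m - 1) × ZMod 2 × ZMod 2,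
      hwt m (cword m f q) ∈
        ({0, 2 ^ m, 2 ^ (m - 1), 2 ^ (m - 1) + 2 ^ ((m - 2) / 2),
          2 ^ (m - 1) - 2 ^ ((m - 2) / 2)} : Set ℕ)) ∧
    (∀ q q' : Fq (m - 1) × Fq (m - 1) × ZMod 2 × ZMod 2, q ≠ q' →
      2 ^ (m - 1) - 2 ^ ((m - 2) / 2) ≤ hdist m (cword m f q) (cword m f q')) ∧
    (∃ q q' : Fq (m - 1) × Fq (m - 1) × ZMod 2 × ZMod 2, q ≠ q' ∧
      hdist m (cword m f q) (cword m f q') = 2 ^ (m - 1) - 2 ^ ((m - 2) / 2)) ∧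
    (Finset.univ.filter fun q : Fq (m - 1) × Fq (m - 1) × ZMod 2 × ZMod 2 =>
        hwt m (cword m f q) = 0).card = 1 ∧
    (Finset.univ.filter fun q : Fq (m - 1) × Fq (m - 1) × ZMod 2 × ZMod 2 =>
        hwt m (cword m f q) = 2 ^ m).card = 1 ∧
    (Finset.univ.filter fun q : Fq (m - 1) × Fq (m - 1) × ZMod 2 × ZMod 2 =>
        hwt m (cword m f q) = 2 ^ (m - 1)).card = 2 ^ (m + 1) - 2 ∧
    (Finset.univ.filter fun q : Fq (m - 1) × Fq (m - 1) × ZMod 2 × ZMod 2 =>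
        hwt m (cword m f q) = 2 ^ (m - 1) + 2 ^ ((m - 2) / 2)).card
      = 2 ^ m * (2 ^ (m - 1) - 1) ∧
    (Finset.univ.filter fun q : Fq (m - 1) × Fq (m - 1) × ZMod 2 × ZMod 2 =>
        hwt m (cword m f q) = 2 ^ (m - 1) - 2 ^ ((m - 2) / 2)).card
      = 2 ^ m * (2 ^ (m - 1) - 1) := by
  have hm2 : 2 ≤ m := by
    obtain ⟨k, rfl⟩ := hm
    omega
  have h0 : ∀ x₂, f (0, x₂) = 0 := by
    intro x₂
    fin_cases x₂
    exacts [hf00, hf01]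
  refine ⟨cword_injective hm2 hf, hwt_cword_mem hm2 hf h0, fun _ _ => le_hdist_cword hm2 hf,
    exists_ne_hdist_cword_eq hm2 hf h0, ?_, ?_, card_filter_hwt_cword_eq_two_pow_pred hm2 hf h0,
    card_filter_hwt_cword_eq_add hm2 hf h0, card_filter_hwt_cword_eq_sub hm2 hf h0⟩
  · rw [filter_hwt_cword_eq_zero hm2 hf h0, card_singleton]
  · rw [← card_filter_hwt_cword_eq_two_pow_sub hm2 le_rfl, Nat.sub_self,
      filter_hwt_cword_eq_zero hm2 hf h0, card_singleton]
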